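/- arXiv:1901.05570 — 2 statements merged into one kernel-verified Lean document; each statement's English description precedes it below -/
import Mathlib

section
/- Suppose a real random variable ξ₀ has E ξ₀ = 0 and Var ξ₀ = 1, and a real random variable η satisfies: (a) there exists a random variable η' on the same space as η with |η − η'| ≤ α almost surely, and (b) the law of η' equals the law of ξ₀. Then d_KR(Law(ξ₀), Law(η̂)) ≤ 3α + 2α² + O(α³) as α → 0, where η̂ = (η − Eη)/√(Var η) (assuming Var η > 0); more precisely d_KR(ξ₀, η̂) ≤ α + |Eη| + |1 − 1/√(Var η)|·E|η| with |Eη| ≤ α and |Var η − 1| ≤ 2α + α². -/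
open MeasureTheory ProbabilityTheory
open scoped ENNReal

/-- Kantorovich–Rubinstein (Wasserstein-1) distance on Borel probability measures on `ℝ`. -/
noncomputable def dKR (μ ν : Measure ℝ) : ℝ :=
  ⨆ g : {g : ℝ → ℝ // LipschitzWith 1 g}, (∫ x, g.1 x ∂μ - ∫ x, g.1 x ∂ν)

section Helpers


variable {Ω : Type*} [MeasurableSpace Ω] {P : Measure Ω} [IsProbabilityMeasure P]

lemma l2_mul_integrable {f g : Ω → ℝ} (hf : MemLp f 2 P) (hg : MemLp g 2 P) :
    Integrable (fun ω => f ω * g ω) P := by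
  refine Integrable.mono' ((hf.integrable_sq.add hg.integrable_sq).const_mul (1/2))
    (hf.aestronglyMeasurable.mul hg.aestronglyMeasurable) ?_
  filter_upwards with ω
  have h := sq_nonneg (|f ω| - |g ω|)
  have : ‖f ω * g ω‖ = |f ω| * |g ω| := by rw [Real.norm_eq_abs, abs_mul]
  rw [this]
  simp only [Pi.add_apply]
  nlinarith [sq_abs (f ω), sq_abs (g ω)]

lemma l1_sq_le_l2 {f : Ω → ℝ} (hf : MemLp f 2 P) :
    (∫ ω, |f ω| ∂P) ^ 2 ≤ ∫ ω, f ω ^ 2 ∂P := by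
  have h := variance_nonneg (|f|) P
  rw [variance_eq_sub hf.abs] at h
  simp only [Pi.pow_apply, Pi.abs_apply, sq_abs] at h
  linarith

lemma integral_two_mul_max_zero {f : Ω → ℝ} (hf : Integrable f P) :
    2 * ∫ ω, max (f ω) 0 ∂P = (∫ ω, |f ω| ∂P) + ∫ ω, f ω ∂P := by
  have h : ∀ a : ℝ, 2 * max a 0 = |a| + a := by
    intro a
    rcases le_total a 0 with h | h
    · rw [max_eq_right h, abs_of_nonpos h]; ring
    · rw [max_eq_left h, abs_of_nonneg h]; ring
  rw [← integral_const_mul]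
  simp only [h]
  exact integral_add hf.abs hf

lemma posPart_half_bound {Z W : Ω → ℝ} (hZm : Measurable Z)
    (hZi : Integrable Z P) (hWi : Integrable W P)
    (hZ0 : ∫ ω, Z ω ∂P = 0) {c κ : ℝ} (hc : 0 ≤ c) (hκ : 0 ≤ κ)
    (hhalf : (P {ω | 0 < Z ω}).toReal ≤ 1/2)
    (hpt : ∀ᵐ ω ∂P, Z ω ≤ c * max (W ω) 0 + κ) :
    ∫ ω, |Z ω| ∂P ≤ κ + c * ((∫ ω, |W ω| ∂P) + ∫ ω, W ω ∂P) := by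
  have hZmax : Integrable (fun ω => max (Z ω) 0) P := hZi.pos_part
  have hWmax : Integrable (fun ω => max (W ω) 0) P := hWi.pos_part
  have hS : MeasurableSet {ω | 0 < Z ω} := measurableSet_lt measurable_const hZm
  have hind : Integrable ({ω | 0 < Z ω}.indicator (fun _ => κ)) P :=
    (integrable_const κ).indicator hS
  have hmono : ∫ ω, max (Z ω) 0 ∂P ≤
      ∫ ω, ({ω | 0 < Z ω}.indicator (fun _ => κ) ω + c * max (W ω) 0) ∂P := by
    refine integral_mono_ae hZmax (hind.add (hWmax.const_mul c)) ?_
    filter_upwards [hpt] with ω hω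
    by_cases h0 : 0 < Z ω
    · have hmem : ω ∈ {ω | 0 < Z ω} := h0
      rw [max_eq_left h0.le, Set.indicator_of_mem hmem]
      have := mul_nonneg hc (le_max_right (W ω) 0)
      linarith
    · rw [max_eq_right (not_lt.1 h0)]
      have h1 : (0:ℝ) ≤ {ω | 0 < Z ω}.indicator (fun _ => κ) ω :=
        Set.indicator_nonneg (fun _ _ => hκ) ω
      have h2 : 0 ≤ c * max (W ω) 0 := mul_nonneg hc (le_max_right _ _)
      linarith
  rw [integral_add hind (hWmax.const_mul c), integral_indicator_const κ hS, integral_const_mul,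
    smul_eq_mul, measureReal_def] at hmono
  have habs : ∫ ω, |Z ω| ∂P = 2 * ∫ ω, max (Z ω) 0 ∂P := by
    have h2 := integral_two_mul_max_zero hZi
    rw [hZ0, add_zero] at h2
    linarith
  have hW2 := integral_two_mul_max_zero hWi
  have hPκ : (P {ω | 0 < Z ω}).toReal * κ ≤ (1/2) * κ :=
    mul_le_mul_of_nonneg_right hhalf hκ
  nlinarith [hmono, hW2, habs, hPκ]

set_option maxHeartbeats 2000000 in
lemma core_small {u X : Ω → ℝ} (hum : Measurable u) (hXm : Measurable X)
    (huL2 : MemLp u 2 P) (hXL2 : MemLp X 2 P)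
    (hu0 : ∫ ω, u ω ∂P = 0) (hu2 : ∫ ω, u ω ^ 2 ∂P = 1)
    {α : ℝ} (hα : 0 ≤ α) (hclose : ∀ᵐ ω ∂P, |X ω - u ω| ≤ α)
    {m s : ℝ} (hm : ∫ ω, X ω ∂P = m) (hm0 : 0 ≤ m)
    (hs0 : 0 < s) (hs1 : s ≤ 1) (hvar : variance X P = s ^ 2) :
    ∫ ω, |X ω - m - s * u ω| ∂P ≤ s * (α + m) + (1 - s) * ∫ ω, |X ω| ∂P := by
  have hui : Integrable u P := huL2.integrable one_le_two
  have hXi : Integrable X P := hXL2.integrable one_le_two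
  set Z : Ω → ℝ := fun ω => X ω - m - s * u ω with hZdef
  have hZm : Measurable Z := (hXm.sub_const m).sub (hum.const_mul s)
  have hZL2 : MemLp Z 2 P := (hXL2.sub (memLp_const m)).sub (huL2.const_mul s)
  have hZi : Integrable Z P := hZL2.integrable one_le_two
  have hZ0 : ∫ ω, Z ω ∂P = 0 := by
    have h1 : Integrable (fun ω => X ω - m) P := hXi.sub (integrable_const m)
    have h2 : Integrable (fun ω => s * u ω) P := hui.const_mul s
    rw [hZdef]
    calc ∫ ω, (X ω - m - s * u ω) ∂P
        = (∫ ω, (X ω - m) ∂P) - ∫ ω, s * u ω ∂P := integral_sub h1 h2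
      _ = 0 := by
          rw [integral_sub hXi (integrable_const m), integral_const_mul, hu0, hm]
          simp
  have hXabs_nonneg : 0 ≤ ∫ ω, |X ω| ∂P := integral_nonneg fun ω => abs_nonneg _
  have hmX : m ≤ ∫ ω, |X ω| ∂P := by
    rw [← hm]
    calc ∫ ω, X ω ∂P ≤ |∫ ω, X ω ∂P| := le_abs_self _
      _ ≤ ∫ ω, |X ω| ∂P := by
          simpa [Real.norm_eq_abs] using norm_integral_le_integral_norm (f := X) (μ := P)
  by_cases hhalf : (P {ω | 0 < (fun ω => -Z ω) ω}).toReal ≤ 1/2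
  · -- Case A : P(Z < 0) ≤ 1/2
    have hb := posPart_half_bound (Z := fun ω => -Z ω) (W := fun ω => -X ω)
      hZm.neg hZi.neg hXi.neg (by rw [integral_neg, hZ0, neg_zero])
      (c := 1 - s) (κ := m + s * α) (by linarith) (by nlinarith)
      hhalf ?_
    · have he : ∀ ω, |(-Z ω)| = |Z ω| := fun ω => abs_neg _
      simp only [he] at hb
      rw [integral_neg] at hb
      have he2 : (∫ ω, |(-X ω)| ∂P) = ∫ ω, |X ω| ∂P := by
        congr 1; funext ω; exact abs_neg _
      rw [he2, hm] at hb
      calc ∫ ω, |Z ω| ∂P ≤ m + s * α + (1 - s) * ((∫ ω, |X ω| ∂P) + -m) := hb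
        _ = s * (α + m) + (1 - s) * ∫ ω, |X ω| ∂P := by ring
    · filter_upwards [hclose] with ω hω
      have hD : -(X ω - u ω) ≤ α := by
        have := abs_le.1 hω; linarith [this.1]
      have h2 : (1 - s) * (-(X ω)) ≤ (1 - s) * max (-(X ω)) 0 :=
        mul_le_mul_of_nonneg_left (le_max_left _ _) (by linarith)
      have hid : -Z ω = m - (1 - s) * X ω - s * (X ω - u ω) := by
        simp only [hZdef]; ring
      rw [hid]
      have h3 : s * (-(X ω - u ω)) ≤ s * α := mul_le_mul_of_nonneg_left hD hs0.le
      nlinarith [h2, h3]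
  · -- Case B : P(Z < 0) > 1/2, so P(0 < Z) ≤ 1/2
    push_neg at hhalf
    have hSneg : MeasurableSet {ω | 0 < -Z ω} := measurableSet_lt measurable_const hZm.neg
    have hSpos : MeasurableSet {ω | 0 < Z ω} := measurableSet_lt measurable_const hZm
    have hdisj : Disjoint {ω | 0 < -Z ω} {ω | 0 < Z ω} := by
      rw [Set.disjoint_left]
      intro ω h1 h2
      simp only [Set.mem_setOf_eq] at h1 h2
      linarith
    have hsum : (P {ω | 0 < -Z ω}).toReal + (P {ω | 0 < Z ω}).toReal ≤ 1 := by
      have h1 : P ({ω | 0 < -Z ω} ∪ {ω | 0 < Z ω}) ≤ 1 := prob_le_one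
      have h2 : (P ({ω | 0 < -Z ω} ∪ {ω | 0 < Z ω})).toReal ≤ 1 := by
        calc (P _).toReal ≤ (1 : ℝ≥0∞).toReal :=
              ENNReal.toReal_mono ENNReal.one_ne_top h1
          _ = 1 := by simp
      rwa [measure_union hdisj hSpos,
        ENNReal.toReal_add (measure_ne_top _ _) (measure_ne_top _ _)] at h2
    have hhalf' : (P {ω | 0 < Z ω}).toReal ≤ 1/2 := by linarith
    by_cases hB1 : m ≤ s * α
    · -- Subcase B1
      have hb := posPart_half_bound (Z := Z) (W := X) hZm hZi hXi hZ0
        (c := 1 - s) (κ := s * α - m) (by linarith) (by linarith)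
        hhalf' ?_
      · rw [hm] at hb
        calc ∫ ω, |Z ω| ∂P ≤ s * α - m + (1 - s) * ((∫ ω, |X ω| ∂P) + m) := hb
          _ ≤ s * (α + m) + (1 - s) * ∫ ω, |X ω| ∂P := by nlinarith
      · filter_upwards [hclose] with ω hω
        have hD : X ω - u ω ≤ α := (abs_le.1 hω).2
        have h2 : (1 - s) * X ω ≤ (1 - s) * max (X ω) 0 :=
          mul_le_mul_of_nonneg_left (le_max_left _ _) (by linarith)
        have hid : Z ω = (1 - s) * X ω + s * (X ω - u ω) - m := by
          simp only [hZdef]; ring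
        rw [hid]
        have h3 : s * (X ω - u ω) ≤ s * α := mul_le_mul_of_nonneg_left hD hs0.le
        nlinarith [h2, h3]
    · -- Subcase B2 : s * α < m
      push_neg at hB1
      -- second moment facts
      set D : Ω → ℝ := fun ω => X ω - u ω with hDdef
      have hDL2 : MemLp D 2 P := hXL2.sub huL2
      have hDi : Integrable D P := hDL2.integrable one_le_two
      have hIuD : Integrable (fun ω => u ω * D ω) P := l2_mul_integrable huL2 hDL2
      have hIu2 : Integrable (fun ω => u ω ^ 2) P := huL2.integrable_sq
      have hID2 : Integrable (fun ω => D ω ^ 2) P := hDL2.integrable_sq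
      have hDm : ∫ ω, D ω ∂P = m := by
        rw [hDdef]
        rw [integral_sub hXi hui, hu0, hm, sub_zero]
      have hD2a : ∫ ω, D ω ^ 2 ∂P ≤ α ^ 2 := by
        have : ∀ᵐ ω ∂P, D ω ^ 2 ≤ α ^ 2 := by
          filter_upwards [hclose] with ω hω
          have h1 := abs_le.1 hω
          simp only [hDdef]
          nlinarith [h1.1, h1.2]
        calc ∫ ω, D ω ^ 2 ∂P ≤ ∫ _ω, α ^ 2 ∂P := integral_mono_ae hID2 (integrable_const _) this
          _ = α ^ 2 := by simp
      set I : ℝ := ∫ ω, u ω * D ω ∂P with hIdef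
      have hi1 : Integrable (fun ω => 2 * (u ω * D ω)) P := hIuD.const_mul 2
      have hi2 : Integrable (fun ω => 2 * (u ω * D ω) + D ω ^ 2) P := hi1.add hID2
      have hX2 : ∫ ω, X ω ^ 2 ∂P = 1 + 2 * I + ∫ ω, D ω ^ 2 ∂P := by
        have hfun : (fun ω => X ω ^ 2) = fun ω => u ω ^ 2 + (2 * (u ω * D ω) + D ω ^ 2) := by
          funext ω; simp only [hDdef]; ring
        rw [hfun, integral_add hIu2 hi2, integral_add hi1 hID2, integral_const_mul, hu2, hIdef]
        ring
      have hs2 : s ^ 2 = 1 + 2 * I + (∫ ω, D ω ^ 2 ∂P) - m ^ 2 := by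
        rw [← hvar, variance_eq_sub hXL2]
        simp only [Pi.pow_apply]
        rw [hX2, hm]
      have hZsq : ∫ ω, Z ω ^ 2 ∂P
          = (1 - s) ^ 2 + 2 * (1 - s) * I + (∫ ω, D ω ^ 2 ∂P) - m ^ 2 := by
        have hfun : (fun ω => Z ω ^ 2) = fun ω =>
            (1 - s) ^ 2 * u ω ^ 2 + ((2 * (1 - s)) * (u ω * D ω) +
              ((-(2 * (1 - s) * m)) * u ω + (D ω ^ 2 + ((-(2 * m)) * D ω + m ^ 2)))) := by
          funext ω; simp only [hZdef, hDdef]; ring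
        have ha1 : Integrable (fun ω => (1 - s) ^ 2 * u ω ^ 2) P := hIu2.const_mul _
        have ha2 : Integrable (fun ω => (2 * (1 - s)) * (u ω * D ω)) P := hIuD.const_mul _
        have ha3 : Integrable (fun ω => (-(2 * (1 - s) * m)) * u ω) P := hui.const_mul _
        have ha5 : Integrable (fun ω => (-(2 * m)) * D ω) P := hDi.const_mul _
        have ha56 : Integrable (fun ω => (-(2 * m)) * D ω + m ^ 2) P := ha5.add (integrable_const _)
        have ha456 : Integrable (fun ω => D ω ^ 2 + ((-(2 * m)) * D ω + m ^ 2)) P := hID2.add ha56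
        have ha3456 : Integrable (fun ω => (-(2 * (1 - s) * m)) * u ω
            + (D ω ^ 2 + ((-(2 * m)) * D ω + m ^ 2))) P := ha3.add ha456
        have ha23456 : Integrable (fun ω => (2 * (1 - s)) * (u ω * D ω)
            + ((-(2 * (1 - s) * m)) * u ω + (D ω ^ 2 + ((-(2 * m)) * D ω + m ^ 2)))) P :=
          ha2.add ha3456
        rw [hfun, integral_add ha1 ha23456, integral_add ha2 ha3456, integral_add ha3 ha456,
          integral_add hID2 ha56, integral_add ha5 (integrable_const _),
          integral_const_mul, integral_const_mul, integral_const_mul, integral_const_mul,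
          hu2, hu0, hDm, integral_const]
        simp only [smul_eq_mul, measure_univ, ENNReal.toReal_one, one_mul, probReal_univ]
        rw [← hIdef]
        ring
      by_cases hα1 : α ≤ 1
      · -- use L2 bound
        have hZabs2 : (∫ ω, |Z ω| ∂P) ^ 2 ≤ ∫ ω, Z ω ^ 2 ∂P := l1_sq_le_l2 hZL2
        have hpoly : ∫ ω, Z ω ^ 2 ∂P ≤ (s * α + m) ^ 2 := by
          rw [hZsq]
          set ED2 := ∫ ω, D ω ^ 2 ∂P
          have hI2 : 2 * I = s ^ 2 + m ^ 2 - 1 - ED2 := by linarith [hs2]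
          have key : (1-s)^2 + 2*(1-s)*I + ED2 - m^2 = s*ED2 - s*m^2 - s*(1-s)^2 := by
            linear_combination (1 - s) * hI2
          rw [key]
          have hsa : 0 ≤ s * α := mul_nonneg hs0.le hα
          have hm' : s * α ≤ m := hB1.le
          have h1 : s^2*α^2 ≤ m^2 := by nlinarith [mul_le_mul hm' hm' hsa (hsa.trans hm')]
          have h2 : s*(s^2*α^2) ≤ s*m^2 := by nlinarith
          have h3 : 2*(s*α)*(s*α) ≤ 2*(s*α)*m := by nlinarith
          have h4 : s*α^2*(1-s)^2 ≤ s*(1-s)^2 := by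
            have : α^2 ≤ 1 := by nlinarith
            nlinarith [mul_nonneg hs0.le (sq_nonneg (1-s))]
          have h5 : s*ED2 ≤ s*α^2 := by nlinarith [hD2a]
          nlinarith [h1, h2, h3, h4, h5, mul_nonneg (mul_nonneg hs0.le (sq_nonneg α)) hs0.le]
        have hZabs_nonneg : 0 ≤ ∫ ω, |Z ω| ∂P := integral_nonneg fun ω => abs_nonneg _
        have hbound : ∫ ω, |Z ω| ∂P ≤ s * α + m := by
          have h1 : (∫ ω, |Z ω| ∂P) ^ 2 ≤ (s * α + m) ^ 2 := le_trans hZabs2 hpoly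
          nlinarith [h1, hZabs_nonneg, mul_nonneg hs0.le hα, hm0]
        calc ∫ ω, |Z ω| ∂P ≤ s * α + m := hbound
          _ = s * α + s * m + (1 - s) * m := by ring
          _ ≤ s * (α + m) + (1 - s) * ∫ ω, |X ω| ∂P := by nlinarith [hmX]
      · -- α > 1 : crude L2 bound
        push_neg at hα1
        have hXmL2 : MemLp (fun ω => X ω - m) 2 P := hXL2.sub (memLp_const m)
        have h1 : (∫ ω, |X ω - m| ∂P) ^ 2 ≤ ∫ ω, (X ω - m) ^ 2 ∂P := l1_sq_le_l2 hXmL2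
        have hXm2 : ∫ ω, (X ω - m) ^ 2 ∂P = s ^ 2 := by
          have hfun : (fun ω => (X ω - m) ^ 2)
              = fun ω => X ω ^ 2 + ((-(2 * m)) * X ω + m ^ 2) := by
            funext ω; ring
          have hb1 : Integrable (fun ω => (-(2 * m)) * X ω) P := hXi.const_mul _
          have hb12 : Integrable (fun ω => (-(2 * m)) * X ω + m ^ 2) P :=
            hb1.add (integrable_const _)
          rw [hfun, integral_add hXL2.integrable_sq hb12,
            integral_add hb1 (integrable_const _), integral_const_mul, hm,
            integral_const, hX2]
          simp only [smul_eq_mul, measure_univ, ENNReal.toReal_one, one_mul, probReal_univ]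
          rw [hs2]; ring
        have hXmabs : ∫ ω, |X ω - m| ∂P ≤ s := by
          rw [hXm2] at h1
          have h0 : 0 ≤ ∫ ω, |X ω - m| ∂P := integral_nonneg fun ω => abs_nonneg _
          nlinarith
        have huabs : ∫ ω, |u ω| ∂P ≤ 1 := by
          have h2 := l1_sq_le_l2 huL2
          rw [hu2] at h2
          have h0 : 0 ≤ ∫ ω, |u ω| ∂P := integral_nonneg fun ω => abs_nonneg _
          nlinarith
        have hptw : ∫ ω, |Z ω| ∂P ≤ (∫ ω, |X ω - m| ∂P) + s * ∫ ω, |u ω| ∂P := by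
          have hc1 : Integrable (fun ω => |X ω - m|) P := (hXi.sub (integrable_const m)).abs
          have hc2 : Integrable (fun ω => s * |u ω|) P := hui.abs.const_mul s
          have hInt2 : Integrable (fun ω => |X ω - m| + s * |u ω|) P := hc1.add hc2
          have := integral_mono_ae hZi.abs hInt2 ?_
          · rw [integral_add hc1 hc2, integral_const_mul] at this
            exact this
          · filter_upwards with ω
            have : Z ω = (X ω - m) - s * u ω := by simp only [hZdef]
            rw [this]
            calc |X ω - m - s * u ω| ≤ |X ω - m| + |s * u ω| := abs_sub _ _
              _ = |X ω - m| + s * |u ω| := by rw [abs_mul, abs_of_nonneg hs0.le]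
        have hfin : ∫ ω, |Z ω| ∂P ≤ 2 * s := by
          calc ∫ ω, |Z ω| ∂P ≤ (∫ ω, |X ω - m| ∂P) + s * ∫ ω, |u ω| ∂P := hptw
            _ ≤ s + s * 1 := by nlinarith [hXmabs, huabs, hs0.le]
            _ = 2 * s := by ring
        calc ∫ ω, |Z ω| ∂P ≤ 2 * s := hfin
          _ ≤ s * α + m := by nlinarith [hB1, hs0]
          _ = s * α + s * m + (1 - s) * m := by ring
          _ ≤ s * (α + m) + (1 - s) * ∫ ω, |X ω| ∂P := by nlinarith [hmX]

set_option maxHeartbeats 1000000 in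
lemma core_main {u X : Ω → ℝ} (hum : Measurable u) (hXm : Measurable X)
    (huL2 : MemLp u 2 P) (hXL2 : MemLp X 2 P)
    (hu0 : ∫ ω, u ω ∂P = 0) (hu2 : ∫ ω, u ω ^ 2 ∂P = 1)
    {α : ℝ} (hα : 0 ≤ α) (hclose : ∀ᵐ ω ∂P, |X ω - u ω| ≤ α)
    {m s : ℝ} (hm : ∫ ω, X ω ∂P = m) (hs0 : 0 < s) (hvar : variance X P = s ^ 2) :
    ∫ ω, |u ω - (X ω - m) / s| ∂P ≤ α + |m| + |1 - 1/s| * ∫ ω, |X ω| ∂P := by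
  have hui : Integrable u P := huL2.integrable one_le_two
  have hXi : Integrable X P := hXL2.integrable one_le_two
  have hXabs_nonneg : 0 ≤ ∫ ω, |X ω| ∂P := integral_nonneg fun ω => abs_nonneg _
  by_cases hs1 : s ≤ 1
  · -- small s
    have key : ∫ ω, |X ω - m - s * u ω| ∂P ≤ s * (α + |m|) + (1 - s) * ∫ ω, |X ω| ∂P := by
      rcases le_or_gt 0 m with hm0 | hm0
      · rw [abs_of_nonneg hm0]
        exact core_small hum hXm huL2 hXL2 hu0 hu2 hα hclose hm hm0 hs0 hs1 hvar
      · have hvarneg : variance (fun ω => -X ω) P = s ^ 2 := by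
          have hv : variance (-X) P = s ^ 2 := by
            rw [← hvar, variance_eq_sub hXL2.neg, variance_eq_sub hXL2]
            simp only [Pi.pow_apply, Pi.neg_apply, neg_sq, integral_neg]
          exact hv
        have h2 := core_small (u := fun ω => -u ω) (X := fun ω => -X ω)
          hum.neg hXm.neg huL2.neg hXL2.neg
          (by rw [integral_neg, hu0, neg_zero])
          (by simp only [neg_sq]; exact hu2)
          hα
          (by filter_upwards [hclose] with ω h;
              calc |(-X ω) - (-u ω)| = |-(X ω - u ω)| := by ring_nf
                _ = |X ω - u ω| := abs_neg _
                _ ≤ α := h)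
          (m := -m) (by rw [integral_neg, hm]) (by linarith) hs0 hs1 hvarneg
        have he1 : ∀ ω, |(-X ω) - (-m) - s * (-u ω)| = |X ω - m - s * u ω| := by
          intro ω
          rw [show (-X ω) - (-m) - s * (-u ω) = -(X ω - m - s * u ω) by ring, abs_neg]
        have he2 : ∀ ω, |(-X ω)| = |X ω| := fun ω => abs_neg _
        simp only [he1, he2] at h2
        calc ∫ ω, |X ω - m - s * u ω| ∂P
            ≤ s * (α + -m) + (1 - s) * ∫ ω, |X ω| ∂P := h2
          _ = s * (α + |m|) + (1 - s) * ∫ ω, |X ω| ∂P := by rw [abs_of_neg hm0]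
    have habs : ∀ ω, |u ω - (X ω - m)/s| = (1/s) * |X ω - m - s * u ω| := by
      intro ω
      have h1 : u ω - (X ω - m)/s = -(X ω - m - s * u ω)/s := by
        field_simp
        ring
      rw [h1, abs_div, abs_neg, abs_of_pos hs0]
      ring
    have h1s : |1 - 1/s| = (1-s)/s := by
      rw [abs_of_nonpos]
      · field_simp
        ring
      · have : 1 ≤ 1/s := by
          rw [le_div_iff₀ hs0]; linarith
        linarith
    calc ∫ ω, |u ω - (X ω - m)/s| ∂P
        = ∫ ω, (1/s) * |X ω - m - s * u ω| ∂P := by simp only [habs]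
      _ = (1/s) * ∫ ω, |X ω - m - s * u ω| ∂P := integral_const_mul _ _
      _ ≤ (1/s) * (s * (α + |m|) + (1 - s) * ∫ ω, |X ω| ∂P) := by
          apply mul_le_mul_of_nonneg_left key
          positivity
      _ = α + |m| + ((1-s)/s) * ∫ ω, |X ω| ∂P := by field_simp
      _ = α + |m| + |1 - 1/s| * ∫ ω, |X ω| ∂P := by rw [h1s]
  · -- s ≥ 1 : pointwise
    push_neg at hs1
    have hc : 0 ≤ 1 - 1/s := by
      have : 1/s ≤ 1 := by
        rw [div_le_one hs0]; linarith
      linarith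
    have hLi : Integrable (fun ω => |u ω - (X ω - m)/s|) P :=
      (hui.sub ((hXi.sub (integrable_const m)).div_const s)).abs
    have hRi1 : Integrable (fun ω => (1 - 1/s) * |X ω|) P := hXi.abs.const_mul _
    have hRi : Integrable (fun ω => (α + |m|) + (1 - 1/s) * |X ω|) P :=
      (integrable_const _).add hRi1
    have hmono := integral_mono_ae hLi hRi ?_
    · rw [integral_add (integrable_const _) hRi1, integral_const, integral_const_mul] at hmono
      simp only [smul_eq_mul, measure_univ, ENNReal.toReal_one, one_mul, probReal_univ] at hmono
      calc ∫ ω, |u ω - (X ω - m)/s| ∂P ≤ (α + |m|) + (1 - 1/s) * ∫ ω, |X ω| ∂P := hmono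
        _ = α + |m| + |1 - 1/s| * ∫ ω, |X ω| ∂P := by rw [abs_of_nonneg hc]
    · filter_upwards [hclose] with ω hω
      have hid : u ω - (X ω - m)/s = (u ω - X ω) + ((1 - 1/s) * X ω + m/s) := by
        field_simp
        ring
      have h1 : |u ω - X ω| ≤ α := by
        rw [← abs_neg]; rw [show -(u ω - X ω) = X ω - u ω by ring]; exact hω
      have h2 : |(1 - 1/s) * X ω| = (1 - 1/s) * |X ω| := by
        rw [abs_mul, abs_of_nonneg hc]
      have h3 : |m/s| ≤ |m| := by
        rw [abs_div, abs_of_pos hs0]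
        apply div_le_self (abs_nonneg _)
        linarith
      calc |u ω - (X ω - m)/s| ≤ |u ω - X ω| + |(1 - 1/s) * X ω + m/s| := by
            rw [hid]; exact abs_add_le _ _
        _ ≤ |u ω - X ω| + (|(1 - 1/s) * X ω| + |m/s|) := by
            have := abs_add_le ((1 - 1/s) * X ω) (m/s)
            linarith
        _ ≤ α + ((1 - 1/s) * |X ω| + |m|) := by rw [h2]; linarith
        _ = (α + |m|) + (1 - 1/s) * |X ω| := by ring


end Helpers

set_option maxHeartbeats 1000000 in
/-- Suppose `ξ₀` has `E ξ₀ = 0`, `Var ξ₀ = 1`, and `η` satisfies: there is `η'` on the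
same space as `η` with `|η − η'| ≤ α` a.s. and `Law(η') = Law(ξ₀)`. Then, with
`η̂ = (η − Eη)/√(Var η)` (and `Var η > 0`), one has the precise bound
`d_KR(ξ₀, η̂) ≤ α + |Eη| + |1 − 1/√(Var η)|·E|η|`, together with `|Eη| ≤ α` and
`|Var η − 1| ≤ 2α + α²`. -/
theorem dKR_standardized_perturbation
    {Ω₀ Ω : Type*} [MeasurableSpace Ω₀] [MeasurableSpace Ω]
    (P₀ : Measure Ω₀) [IsProbabilityMeasure P₀] (P : Measure Ω) [IsProbabilityMeasure P]
    (ξ₀ : Ω₀ → ℝ) (hξ₀ : Measurable ξ₀) (hξ₀L2 : MemLp ξ₀ 2 P₀)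
    (hmean₀ : ∫ ω, ξ₀ ω ∂P₀ = 0) (hvar₀ : variance ξ₀ P₀ = 1)
    (η η' : Ω → ℝ) (hη : Measurable η) (hη' : Measurable η') (hηL2 : MemLp η 2 P)
    (α : ℝ) (hα : 0 ≤ α) (hclose : ∀ᵐ ω ∂P, |η ω - η' ω| ≤ α)
    (hlaw : P.map η' = P₀.map ξ₀) (hvarη : 0 < variance η P) :
    dKR (P₀.map ξ₀)
        (P.map (fun ω => (η ω - ∫ ω', η ω' ∂P) / Real.sqrt (variance η P))) ≤
      α + |∫ ω, η ω ∂P| + |1 - 1 / Real.sqrt (variance η P)| * (∫ ω, |η ω| ∂P) ∧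
    |∫ ω, η ω ∂P| ≤ α ∧
    |variance η P - 1| ≤ 2 * α + α ^ 2 := by
  set s : ℝ := Real.sqrt (variance η P) with hsdef
  set m : ℝ := ∫ ω, η ω ∂P with hmdef
  have hs0 : 0 < s := Real.sqrt_pos.2 hvarη
  have hvar : variance η P = s ^ 2 := (Real.sq_sqrt hvarη.le).symm
  have hηi : Integrable η P := hηL2.integrable one_le_two
  -- transfer of law facts
  have hη'L2 : MemLp η' 2 P := by
    have h0 : MemLp (id : ℝ → ℝ) 2 (P₀.map ξ₀) := by
      rw [memLp_map_measure_iff aestronglyMeasurable_id hξ₀.aemeasurable]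
      exact hξ₀L2
    rw [← hlaw] at h0
    have h1 := (memLp_map_measure_iff aestronglyMeasurable_id hη'.aemeasurable).1 h0
    exact h1
  have hη'i : Integrable η' P := hη'L2.integrable one_le_two
  have hη'mean : ∫ ω, η' ω ∂P = 0 := by
    have h1 : ∫ x : ℝ, x ∂(P.map η') = ∫ ω, η' ω ∂P :=
      integral_map hη'.aemeasurable aestronglyMeasurable_id
    have h2 : ∫ x : ℝ, x ∂(P₀.map ξ₀) = ∫ ω, ξ₀ ω ∂P₀ :=
      integral_map hξ₀.aemeasurable aestronglyMeasurable_id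
    rw [← h1, hlaw, h2, hmean₀]
  have hξ₀sq : ∫ ω, ξ₀ ω ^ 2 ∂P₀ = 1 := by
    have h := variance_eq_sub hξ₀L2
    rw [hvar₀, hmean₀] at h
    simp only [Pi.pow_apply] at h
    nlinarith [h]
  have hη'sq : ∫ ω, η' ω ^ 2 ∂P = 1 := by
    have h1 : ∫ x : ℝ, x ^ 2 ∂(P.map η') = ∫ ω, η' ω ^ 2 ∂P :=
      integral_map hη'.aemeasurable (continuous_pow 2).aestronglyMeasurable
    have h2 : ∫ x : ℝ, x ^ 2 ∂(P₀.map ξ₀) = ∫ ω, ξ₀ ω ^ 2 ∂P₀ :=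
      integral_map hξ₀.aemeasurable (continuous_pow 2).aestronglyMeasurable
    rw [← h1, hlaw, h2, hξ₀sq]
  -- D facts
  have hDL2 : MemLp (fun ω => η ω - η' ω) 2 P := hηL2.sub hη'L2
  have hDi : Integrable (fun ω => η ω - η' ω) P := hηi.sub hη'i
  have hmD : m = ∫ ω, (η ω - η' ω) ∂P := by
    rw [hmdef, integral_sub hηi hη'i, hη'mean, sub_zero]
  have hDabsle : ∫ ω, |η ω - η' ω| ∂P ≤ α := by
    calc ∫ ω, |η ω - η' ω| ∂P ≤ ∫ _ω, α ∂P := integral_mono_ae hDi.abs (integrable_const α) hclose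
      _ = α := by simp
  have hmabs : |m| ≤ α := by
    rw [hmD]
    calc |∫ ω, (η ω - η' ω) ∂P| ≤ ∫ ω, |η ω - η' ω| ∂P := by
          simpa [Real.norm_eq_abs] using
            norm_integral_le_integral_norm (f := fun ω => η ω - η' ω) (μ := P)
      _ ≤ α := hDabsle
  -- variance bound
  have hvarbound : |variance η P - 1| ≤ 2 * α + α ^ 2 := by
    have hIuD : Integrable (fun ω => η' ω * (η ω - η' ω)) P := l2_mul_integrable hη'L2 hDL2
    have hη'abs : ∫ ω, |η' ω| ∂P ≤ 1 := by
      have h2 := l1_sq_le_l2 hη'L2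
      rw [hη'sq] at h2
      have h0 : 0 ≤ ∫ ω, |η' ω| ∂P := integral_nonneg fun ω => abs_nonneg _
      nlinarith
    have hIabs : |∫ ω, η' ω * (η ω - η' ω) ∂P| ≤ α := by
      have h1 : |∫ ω, η' ω * (η ω - η' ω) ∂P| ≤ ∫ ω, |η' ω| * |η ω - η' ω| ∂P := by
        simpa [Real.norm_eq_abs, abs_mul] using
          norm_integral_le_integral_norm (f := fun ω => η' ω * (η ω - η' ω)) (μ := P)
      have habsint : Integrable (fun ω => |η' ω| * |η ω - η' ω|) P := by
        have h := hIuD.abs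
        have heq : (fun ω => |η' ω * (η ω - η' ω)|) = fun ω => |η' ω| * |η ω - η' ω| := by
          funext ω; rw [abs_mul]
        rwa [heq] at h
      have h2 : ∫ ω, |η' ω| * |η ω - η' ω| ∂P ≤ ∫ ω, α * |η' ω| ∂P := by
        refine integral_mono_ae habsint (hη'i.abs.const_mul α) ?_
        filter_upwards [hclose] with ω hω
        rw [mul_comm]
        exact mul_le_mul_of_nonneg_right hω (abs_nonneg _)
      have h3 : ∫ ω, α * |η' ω| ∂P = α * ∫ ω, |η' ω| ∂P := integral_const_mul _ _
      nlinarith [h1, h2, h3, mul_le_mul_of_nonneg_left hη'abs hα]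
    have hID2 : Integrable (fun ω => (η ω - η' ω) ^ 2) P := hDL2.integrable_sq
    have hD2a : ∫ ω, (η ω - η' ω) ^ 2 ∂P ≤ α ^ 2 := by
      have hae : ∀ᵐ ω ∂P, (η ω - η' ω) ^ 2 ≤ α ^ 2 := by
        filter_upwards [hclose] with ω hω
        have h1 := abs_le.1 hω
        nlinarith [h1.1, h1.2]
      calc ∫ ω, (η ω - η' ω) ^ 2 ∂P ≤ ∫ _ω, α ^ 2 ∂P :=
            integral_mono_ae hID2 (integrable_const _) hae
        _ = α ^ 2 := by simp
    have hD2b : m ^ 2 ≤ ∫ ω, (η ω - η' ω) ^ 2 ∂P := by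
      have h1 := l1_sq_le_l2 hDL2
      have h2 : |m| ≤ ∫ ω, |η ω - η' ω| ∂P := by
        rw [hmD]
        simpa [Real.norm_eq_abs] using
          norm_integral_le_integral_norm (f := fun ω => η ω - η' ω) (μ := P)
      have h3 : m ^ 2 ≤ (∫ ω, |η ω - η' ω| ∂P) ^ 2 := by
        rw [← sq_abs m]
        exact pow_le_pow_left₀ (abs_nonneg _) h2 2
      linarith
    have hi1 : Integrable (fun ω => 2 * (η' ω * (η ω - η' ω))) P := hIuD.const_mul 2
    have hi2 : Integrable (fun ω => 2 * (η' ω * (η ω - η' ω)) + (η ω - η' ω) ^ 2) P :=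
      hi1.add hID2
    have hX2 : ∫ ω, η ω ^ 2 ∂P
        = 1 + 2 * (∫ ω, η' ω * (η ω - η' ω) ∂P) + ∫ ω, (η ω - η' ω) ^ 2 ∂P := by
      have hfun : (fun ω => η ω ^ 2)
          = fun ω => η' ω ^ 2 + (2 * (η' ω * (η ω - η' ω)) + (η ω - η' ω) ^ 2) := by
        funext ω; ring
      rw [hfun, integral_add hη'L2.integrable_sq hi2, integral_add hi1 hID2,
        integral_const_mul, hη'sq]
      ring
    have hvd : variance η P = ∫ ω, η ω ^ 2 ∂P - m ^ 2 := by
      have h := variance_eq_sub hηL2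
      simp only [Pi.pow_apply] at h
      rw [h, hmdef]
    rw [abs_le]
    constructor
    · rw [hvd, hX2]
      nlinarith [abs_le.1 hIabs]
    · rw [hvd, hX2]
      nlinarith [abs_le.1 hIabs]
  refine ⟨?_, hmabs, hvarbound⟩
  -- the dKR bound
  have hXabs_nonneg : 0 ≤ ∫ ω, |η ω| ∂P := integral_nonneg fun ω => abs_nonneg _
  have hK0 : 0 ≤ α + |m| + |1 - 1/s| * ∫ ω, |η ω| ∂P := by positivity
  refine Real.iSup_le ?_ hK0
  rintro ⟨g, hg⟩
  simp only
  have hgc : Continuous g := hg.continuous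
  have hehatm : Measurable (fun ω => (η ω - m) / s) := (hη.sub_const m).div_const s
  have hehati : Integrable (fun ω => (η ω - m) / s) P :=
    (hηi.sub (integrable_const m)).div_const s
  have step1 : ∫ x, g x ∂(P₀.map ξ₀) = ∫ ω, g (η' ω) ∂P := by
    rw [← hlaw, integral_map hη'.aemeasurable hgc.aestronglyMeasurable]
  have step2 : ∫ x, g x ∂(P.map (fun ω => (η ω - m) / s)) = ∫ ω, g ((η ω - m) / s) ∂P :=
    integral_map hehatm.aemeasurable hgc.aestronglyMeasurable
  have lip : ∀ a b : ℝ, |g a - g b| ≤ |a - b| := by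
    intro a b
    have := hg.dist_le_mul a b
    simpa [Real.dist_eq] using this
  have hgη' : Integrable (fun ω => g (η' ω)) P := by
    refine Integrable.mono' ((integrable_const |g 0|).add hη'i.abs)
      (hgc.measurable.comp hη').aestronglyMeasurable ?_
    filter_upwards with ω
    have h1 := lip (η' ω) 0
    simp only [Real.norm_eq_abs, sub_zero] at h1 ⊢
    calc |g (η' ω)| = |(g (η' ω) - g 0) + g 0| := by ring_nf
      _ ≤ |g (η' ω) - g 0| + |g 0| := abs_add_le _ _
      _ ≤ |g 0| + |η' ω| := by linarith
  have hgehat : Integrable (fun ω => g ((η ω - m) / s)) P := by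
    refine Integrable.mono' ((integrable_const |g 0|).add hehati.abs)
      (hgc.measurable.comp hehatm).aestronglyMeasurable ?_
    filter_upwards with ω
    have h1 := lip ((η ω - m) / s) 0
    simp only [Real.norm_eq_abs, sub_zero] at h1 ⊢
    calc |g ((η ω - m) / s)| = |(g ((η ω - m) / s) - g 0) + g 0| := by ring_nf
      _ ≤ |g ((η ω - m) / s) - g 0| + |g 0| := abs_add_le _ _
      _ ≤ |g 0| + |(η ω - m) / s| := by linarith
  rw [step1, step2, ← integral_sub hgη' hgehat]
  have hcoup : ∫ ω, (g (η' ω) - g ((η ω - m) / s)) ∂P ≤ ∫ ω, |η' ω - (η ω - m) / s| ∂P := by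
    refine integral_mono_ae (hgη'.sub hgehat) (hη'i.sub hehati).abs ?_
    filter_upwards with ω
    calc g (η' ω) - g ((η ω - m) / s) ≤ |g (η' ω) - g ((η ω - m) / s)| := le_abs_self _
      _ ≤ |η' ω - (η ω - m) / s| := lip _ _
  refine le_trans hcoup ?_
  exact core_main hη' hη hη'L2 hηL2 hη'mean hη'sq hα
    (by filter_upwards [hclose] with ω h; exact h) rfl hs0 hvar
end

section
/- Let ξ be a real random variable with E ξ = 0 and E ξ² < ∞, and let ε ∈ (−1, 1), μ > 0, δ > 0 satisfy (1+|ε|)²·E ξ²/μ² ≤ δ and δ ≥ |ε|μ/(1−|ε|). Then for every Borel set A ⊂ ℝ: P(ξ ∈ A) ≤ P((1+ε)ξ ∈ A^δ) + δ and P((1+ε)ξ ∈ A) ≤ P(ξ ∈ A^δ) + δ, where A^δ is the δ-neighborhood of A. -/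
open MeasureTheory

/-- Let `ξ` be a centered square-integrable real random variable, `ε ∈ (−1,1)`, `μ > 0`,
`δ > 0` with `(1+|ε|)²·E ξ²/μ² ≤ δ` and `δ ≥ |ε|μ/(1−|ε|)`. Then for every Borel set
`A ⊆ ℝ`: `P(ξ ∈ A) ≤ P((1+ε)ξ ∈ A^δ) + δ` and `P((1+ε)ξ ∈ A) ≤ P(ξ ∈ A^δ) + δ`,
where `A^δ` is the open `δ`-neighborhood of `A`. -/
theorem LP_key_step {Ω : Type*} [MeasurableSpace Ω]
    (P : Measure Ω) [IsProbabilityMeasure P] (ξ : Ω → ℝ) (hξ : Measurable ξ)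
    (hL2 : MemLp ξ 2 P) (hmean : ∫ ω, ξ ω ∂P = 0)
    (ε : ℝ) (hε : |ε| < 1) (μ δ : ℝ) (hμ : 0 < μ) (hδ : 0 < δ)
    (hcheb : (1 + |ε|) ^ 2 * (∫ ω, (ξ ω) ^ 2 ∂P) / μ ^ 2 ≤ δ)
    (hδ' : |ε| * μ / (1 - |ε|) ≤ δ) :
    ∀ A : Set ℝ, MeasurableSet A →
      (P {ω | ξ ω ∈ A}).toReal ≤
          (P {ω | (1 + ε) * ξ ω ∈ Metric.thickening δ A}).toReal + δ ∧
        (P {ω | (1 + ε) * ξ ω ∈ A}).toReal ≤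
          (P {ω | ξ ω ∈ Metric.thickening δ A}).toReal + δ := by
  have hsq : Integrable (fun ω => (ξ ω) ^ 2) P := hL2.integrable_sq
  have hint_nonneg : (0:ℝ) ≤ ∫ ω, (ξ ω) ^ 2 ∂P :=
    integral_nonneg fun ω => sq_nonneg _
  -- Chebyshev bound
  have cheb : (P {ω | μ < |ξ ω|}).toReal ≤ δ := by
    have h1 : μ ^ 2 * (P {ω | μ ^ 2 ≤ (ξ ω) ^ 2}).toReal ≤ ∫ ω, (ξ ω) ^ 2 ∂P :=
      mul_meas_ge_le_integral_of_nonneg (Filter.Eventually.of_forall fun ω => sq_nonneg _)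
        hsq (μ ^ 2)
    have hsub : {ω | μ < |ξ ω|} ⊆ {ω | μ ^ 2 ≤ (ξ ω) ^ 2} := by
      intro ω hω
      have : μ ^ 2 ≤ |ξ ω| ^ 2 := pow_le_pow_left₀ hμ.le (le_of_lt hω) 2
      simpa [sq_abs] using this
    have h2 : (P {ω | μ < |ξ ω|}).toReal ≤ (P {ω | μ ^ 2 ≤ (ξ ω) ^ 2}).toReal :=
      ENNReal.toReal_mono (measure_ne_top _ _) (measure_mono hsub)
    have h3 : (∫ ω, (ξ ω) ^ 2 ∂P) / μ ^ 2 ≤ δ := by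
      refine le_trans ?_ hcheb
      have h4 : (1:ℝ) ≤ (1 + |ε|) ^ 2 := by nlinarith [abs_nonneg ε]
      have : (∫ ω, (ξ ω) ^ 2 ∂P) ≤ (1 + |ε|) ^ 2 * (∫ ω, (ξ ω) ^ 2 ∂P) := by
        nlinarith
      exact div_le_div_of_nonneg_right this (by positivity) |>.trans_eq rfl
    calc (P {ω | μ < |ξ ω|}).toReal
        ≤ (P {ω | μ ^ 2 ≤ (ξ ω) ^ 2}).toReal := h2
      _ ≤ (∫ ω, (ξ ω) ^ 2 ∂P) / μ ^ 2 := by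
          rw [le_div_iff₀ (by positivity)]; linarith [h1]
      _ ≤ δ := h3
  -- pointwise distance bound
  have hdist : ∀ x : ℝ, |x| ≤ μ → |ε * x| < δ := by
    intro x hx
    rcases eq_or_lt_of_le (abs_nonneg ε) with h0 | h0
    · have he : ε = 0 := abs_eq_zero.1 h0.symm
      simpa [he] using hδ
    · have h1ε : 0 < 1 - |ε| := by linarith
      have : |ε| * μ ≤ δ * (1 - |ε|) := by
        rw [div_le_iff₀ h1ε] at hδ'; linarith
      have hq : |ε * x| ≤ |ε| * μ := by
        rw [abs_mul]
        exact mul_le_mul_of_nonneg_left hx (abs_nonneg ε)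
      have : δ * (1 - |ε|) < δ := by nlinarith
      linarith
  -- generic union bound
  have union_bound : ∀ S T : Set Ω, S ⊆ T ∪ {ω | μ < |ξ ω|} →
      (P S).toReal ≤ (P T).toReal + δ := by
    intro S T hST
    have h1 : P S ≤ P T + P {ω | μ < |ξ ω|} :=
      le_trans (measure_mono hST) (measure_union_le _ _)
    have h2 : (P S).toReal ≤ (P T).toReal + (P {ω | μ < |ξ ω|}).toReal := by
      have := ENNReal.toReal_mono
        (by finiteness : P T + P {ω | μ < |ξ ω|} ≠ ⊤) h1
      rwa [ENNReal.toReal_add (measure_ne_top _ _) (measure_ne_top _ _)] at this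
    linarith [cheb]
  intro A hA
  constructor
  · refine union_bound _ _ ?_
    intro ω hω
    by_cases hb : |ξ ω| ≤ μ
    · left
      refine Metric.mem_thickening_iff.2 ⟨ξ ω, hω, ?_⟩
      have : (1 + ε) * ξ ω - ξ ω = ε * ξ ω := by ring
      simpa [Real.dist_eq, this] using hdist (ξ ω) hb
    · right; exact lt_of_not_ge hb
  · refine union_bound _ _ ?_
    intro ω hω
    by_cases hb : |ξ ω| ≤ μ
    · left
      refine Metric.mem_thickening_iff.2 ⟨(1 + ε) * ξ ω, hω, ?_⟩
      have : ξ ω - (1 + ε) * ξ ω = -(ε * ξ ω) := by ring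
      simpa [Real.dist_eq, this] using hdist (ξ ω) hb
    · right; exact lt_of_not_ge hb
end
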